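/- Let G = (V,E) be a finite undirected graph, φ ∈ (0,1), h a positive integer, A ⊆ V, and Δ : A → ℝ_{≥0}, and let (Δ, f, l) be a valid solution for G{A}. Let k ≥ 1, S = {v ∈ A : l(v) ≥ k}, and A' = A∖S. Define Δ'(u) = Δ(u) + (2/φ)·|E_G({u}, S)| for u ∈ A', and let f' and l' be the restrictions of f and l to A'×A' and A' respectively. Then (Δ', f', l') is a valid state for G{A'}. -/

import Mathlib

/-!
Cutting `S` out of `A` changes the flow balance of `u ∈ A \ S` only through the edges
between `u` and `S`, and across each of them at most `2/φ` units moved in either direction.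
Crediting `2/φ` per such edge to the source of `u` therefore keeps both the excess bound of a
pre-flow and the lower bound `deg u ≤ f(u)`; the saturation and label conditions only involve
pairs inside `A \ S`, where nothing changed.
-/

open Finset

noncomputable section
open scoped Classical

/-- `|E_G(S,T)|`: the number of edges of `G` with one endpoint in `S` and the other in `T`. -/
def eCount {V : Type*} [Fintype V] [DecidableEq V] (G : SimpleGraph V) (S T : Finset V) : ℕ :=
  ((S ×ˢ T).filter fun p => G.Adj p.1 p.2).card

/-- `f` is a pre-flow on `G[A]` for source `Δ`. -/
def IsPreflow {V : Type*} [Fintype V] [DecidableEq V] (G : SimpleGraph V) (φ : ℝ)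
    (A : Finset V) (Δ : V → ℝ) (f : V → V → ℝ) : Prop :=
  (∀ u v, f u v = - f v u) ∧
  (∀ u v, ¬(u ∈ A ∧ v ∈ A ∧ G.Adj u v) → f u v = 0) ∧
  (∀ u ∈ A, ∀ v ∈ A, G.Adj u v → |f u v| ≤ 2 / φ) ∧
  (∀ v ∈ A, ∑ u ∈ A, f v u ≤ Δ v)

/-- `f(v) = Δ(v) + ∑_u f(u,v)`. -/
def mass {V : Type*} [Fintype V] [DecidableEq V] (A : Finset V)
    (Δ : V → ℝ) (f : V → V → ℝ) (v : V) : ℝ :=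
  Δ v + ∑ u ∈ A, f u v

/-- `(Δ, f, l)` is a valid state for `G{A}`. -/
def ValidState {V : Type*} [Fintype V] [DecidableEq V] (G : SimpleGraph V) (φ : ℝ) (h : ℕ)
    (A : Finset V) (Δ : V → ℝ) (f : V → V → ℝ) (l : V → ℕ) : Prop :=
  IsPreflow G φ A Δ f ∧
  (∀ v ∈ A, l v ≤ h) ∧
  (∀ u ∈ A, ∀ v ∈ A, G.Adj u v → l v + 1 < l u → f u v = 2 / φ) ∧
  (∀ u ∈ A, 1 ≤ l u → (G.degree u : ℝ) ≤ mass A Δ f u)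

/-- `(Δ, f, l)` is a valid solution for `G{A}`. -/
def ValidSolution {V : Type*} [Fintype V] [DecidableEq V] (G : SimpleGraph V) (φ : ℝ)
    (h : ℕ) (A : Finset V) (Δ : V → ℝ) (f : V → V → ℝ) (l : V → ℕ) : Prop :=
  ValidState G φ h A Δ f l ∧
  (∀ u ∈ A, l u < h → mass A Δ f u ≤ (G.degree u : ℝ))

def trimSource {V : Type*} [Fintype V] [DecidableEq V] (G : SimpleGraph V) (φ : ℝ)
    (S : Finset V) (Δ : V → ℝ) (u : V) : ℝ :=
  Δ u + 2 / φ * (eCount G {u} S : ℝ)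

def restrictFlow {V : Type*} [DecidableEq V] (B : Finset V) (f : V → V → ℝ) (u v : V) : ℝ :=
  if u ∈ B ∧ v ∈ B then f u v else 0

theorem restrictFlow_of_mem {V : Type*} [DecidableEq V] {B : Finset V} {f : V → V → ℝ} {u v : V}
    (hu : u ∈ B) (hv : v ∈ B) : restrictFlow B f u v = f u v :=
  if_pos ⟨hu, hv⟩

section Trim

variable {V : Type*} [Fintype V] [DecidableEq V] {G : SimpleGraph V} {φ : ℝ} {h : ℕ}
  {A S : Finset V} {Δ : V → ℝ} {f : V → V → ℝ} {l : V → ℕ}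

theorem eCount_singleton_left (G : SimpleGraph V) (v : V) (S : Finset V) :
    eCount G {v} S = #{u ∈ S | G.Adj v u} := by
  have hedges : ({v} ×ˢ S).filter (fun p => G.Adj p.1 p.2) = {v} ×ˢ {u ∈ S | G.Adj v u} := by
    ext ⟨a, b⟩
    simp only [mem_filter, mem_product, mem_singleton]
    grind
  rw [eCount, hedges, card_product, card_singleton, one_mul]

namespace IsPreflow

theorem abs_le_of_mem (hf : IsPreflow G φ A Δ f) {u v : V} (hu : u ∈ A) (hv : v ∈ A) :
    |f u v| ≤ if G.Adj v u then 2 / φ else 0 := by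
  split_ifs with hadj
  · exact hf.2.2.1 u hu v hv hadj.symm
  · rw [hf.2.1 u v fun huv => hadj huv.2.2.symm, abs_zero]

theorem sum_abs_le_eCount (hf : IsPreflow G φ A Δ f) (hS : S ⊆ A) {v : V} (hv : v ∈ A) :
    ∑ u ∈ S, |f u v| ≤ 2 / φ * (eCount G {v} S : ℝ) :=
  calc ∑ u ∈ S, |f u v| ≤ ∑ u ∈ S, if G.Adj v u then 2 / φ else 0 :=
        sum_le_sum fun u hu => hf.abs_le_of_mem (hS hu) hv
    _ = 2 / φ * (eCount G {v} S : ℝ) := by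
        rw [← sum_filter, sum_const, nsmul_eq_mul, eCount_singleton_left, mul_comm]

theorem restrict (hf : IsPreflow G φ A Δ f) (hS : S ⊆ A) :
    IsPreflow G φ (A \ S) (trimSource G φ S Δ) (restrictFlow (A \ S) f) := by
  have ⟨hanti, hzero, hbound, hexcess⟩ := hf
  refine ⟨fun u v => ?_, fun u v huv => ?_, fun u hu v hv hadj => ?_, fun v hv => ?_⟩
  · simp only [restrictFlow, and_comm (a := u ∈ A \ S), hanti u v]
    split_ifs <;> simp
  · unfold restrictFlow
    split_ifs with hmem
    · exact hzero u v fun ⟨_, _, hadj⟩ => huv ⟨hmem.1, hmem.2, hadj⟩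
    · rfl
  · rw [restrictFlow_of_mem hu hv]
    exact hbound u (sdiff_subset hu) v (sdiff_subset hv) hadj
  · have hvA : v ∈ A := sdiff_subset hv
    have hback : -∑ u ∈ S, f v u ≤ ∑ u ∈ S, |f u v| := by
      rw [← sum_neg_distrib]
      exact sum_le_sum fun u _ => (hanti u v).symm ▸ le_abs_self _
    calc ∑ u ∈ A \ S, restrictFlow (A \ S) f v u
        = ∑ u ∈ A, f v u - ∑ u ∈ S, f v u := by
          rw [← sum_sdiff_eq_sub hS]
          exact sum_congr rfl fun u hu => restrictFlow_of_mem hv hu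
      _ ≤ trimSource G φ S Δ v := by
          unfold trimSource
          linarith [hexcess v hvA, hf.sum_abs_le_eCount hS hvA]

theorem mass_le_mass_restrict (hf : IsPreflow G φ A Δ f) (hS : S ⊆ A) {u : V} (hu : u ∈ A \ S) :
    mass A Δ f u ≤ mass (A \ S) (trimSource G φ S Δ) (restrictFlow (A \ S) f) u := by
  have hin : ∑ v ∈ S, f v u ≤ 2 / φ * (eCount G {u} S : ℝ) :=
    (sum_le_sum fun v _ => le_abs_self (f v u)).trans
      (hf.sum_abs_le_eCount hS (sdiff_subset hu))
  have hrestrict : ∑ v ∈ A \ S, restrictFlow (A \ S) f v u = ∑ v ∈ A, f v u - ∑ v ∈ S, f v u := by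
    rw [← sum_sdiff_eq_sub hS]
    exact sum_congr rfl fun v hv => restrictFlow_of_mem hv hu
  unfold mass trimSource
  linarith

end IsPreflow

theorem ValidState.restrict (hvalid : ValidState G φ h A Δ f l) (hS : S ⊆ A) :
    ValidState G φ h (A \ S) (trimSource G φ S Δ) (restrictFlow (A \ S) f) l := by
  obtain ⟨hf, hlh, hsat, hmass⟩ := hvalid
  refine ⟨hf.restrict hS, fun v hv => hlh v (sdiff_subset hv), fun u hu v hv hadj hl => ?_,
    fun u hu hl => (hmass u (sdiff_subset hu) hl).trans (hf.mass_le_mass_restrict hS hu)⟩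
  rw [restrictFlow_of_mem hu hv]
  exact hsat u (sdiff_subset hu) v (sdiff_subset hv) hadj hl

end Trim

theorem valid_state_after_trim_general
    {V : Type*} [Fintype V] [DecidableEq V] (G : SimpleGraph V) (φ : ℝ) (h : ℕ)
    (A : Finset V) (Δ : V → ℝ) (f : V → V → ℝ) (l : V → ℕ) (k : ℕ)
    (hsol : ValidSolution G φ h A Δ f l)
    (S : Finset V) (hS : S = A.filter fun v => k ≤ l v)
    (A' : Finset V) (hA' : A' = A \ S)
    (Δ' : V → ℝ) (hΔ' : ∀ u, Δ' u = Δ u + (2 / φ) * (eCount G {u} S : ℝ))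
    (f' : V → V → ℝ) (hf' : ∀ u v, f' u v = if u ∈ A' ∧ v ∈ A' then f u v else 0) :
    ValidState G φ h A' Δ' f' l := by
  obtain rfl : Δ' = trimSource G φ S Δ := funext hΔ'
  obtain rfl : f' = restrictFlow A' f := funext fun u => funext (hf' u)
  subst hA'
  exact hsol.1.restrict (hS ▸ filter_subset _ _)

theorem valid_state_after_trim
    {V : Type*} [Fintype V] [DecidableEq V] (G : SimpleGraph V) (φ : ℝ) (h : ℕ)
    (A : Finset V) (Δ : V → ℝ) (f : V → V → ℝ) (l : V → ℕ) (k : ℕ)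
    (hφ0 : 0 < φ) (hφ1 : φ < 1) (hh : 0 < h) (hk : 1 ≤ k)
    (hΔ0 : ∀ v, 0 ≤ Δ v)
    (hsol : ValidSolution G φ h A Δ f l)
    (S : Finset V) (hS : S = A.filter fun v => k ≤ l v)
    (A' : Finset V) (hA' : A' = A \ S)
    (Δ' : V → ℝ) (hΔ' : ∀ u, Δ' u = Δ u + (2 / φ) * (eCount G {u} S : ℝ))
    (f' : V → V → ℝ) (hf' : ∀ u v, f' u v = if u ∈ A' ∧ v ∈ A' then f u v else 0) :
    ValidState G φ h A' Δ' f' l :=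
  valid_state_after_trim_general G φ h A Δ f l k hsol S hS A' hA' Δ' hΔ' f' hf'
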